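/- arXiv:2412.02799 — 4 statements merged into one kernel-verified Lean document; each statement's English description precedes it below -/
import Mathlib

section
/- Let a, b, t be real numbers with b ≠ 0 and t > 0, and set ε₀ = (√(a² + 2|b|t) − |a|) / |b|. Then for every real x with |x| ≤ ε₀ one has |a·x + (b/2)·x²| ≤ t. -/
/-- Sufficiency half of Theorem 1 of the QPET paper: with
`ε₀ = (√(a² + 2|b|t) − |a|) / |b|`, every `x` with `|x| ≤ ε₀` satisfies
`|a·x + (b/2)·x²| ≤ t`. -/
theorem qpet_theorem1_sufficiency (a b t : ℝ) (hb : b ≠ 0) (ht : 0 < t)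
    (ε₀ : ℝ) (hε₀ : ε₀ = (Real.sqrt (a ^ 2 + 2 * |b| * t) - |a|) / |b|) :
    ∀ x : ℝ, |x| ≤ ε₀ → |a * x + (b / 2) * x ^ 2| ≤ t := by
  intro x hx
  have hbpos : 0 < |b| := abs_pos.mpr hb
  have harg : 0 ≤ a ^ 2 + 2 * |b| * t := by positivity
  have hs : Real.sqrt (a ^ 2 + 2 * |b| * t) ^ 2 = a ^ 2 + 2 * |b| * t :=
    Real.sq_sqrt harg
  have hs0 : 0 ≤ Real.sqrt (a ^ 2 + 2 * |b| * t) := Real.sqrt_nonneg _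
  have hkey : |a| * ε₀ + |b| / 2 * ε₀ ^ 2 = t := by
    have h : |b| * ε₀ = Real.sqrt (a ^ 2 + 2 * |b| * t) - |a| := by
      rw [hε₀]
      field_simp
    have hsq : (|b| * ε₀ + |a|) ^ 2 = a ^ 2 + 2 * |b| * t := by
      rw [h, sub_add_cancel, hs]
    have h2 : |b| * (|a| * ε₀ + |b| / 2 * ε₀ ^ 2) = |b| * t := by
      nlinarith [hsq, sq_abs a]
    exact mul_left_cancel₀ hbpos.ne' h2
  have hx0 : 0 ≤ |x| := abs_nonneg x
  have hε0 : 0 ≤ ε₀ := le_trans hx0 hx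
  have h1 : |a * x + (b / 2) * x ^ 2| ≤ |a| * |x| + |b| / 2 * |x| ^ 2 := by
    calc |a * x + (b / 2) * x ^ 2| ≤ |a * x| + |(b / 2) * x ^ 2| := abs_add_le _ _
    _ = |a| * |x| + |b| / 2 * |x| ^ 2 := by
        rw [abs_mul, abs_mul, abs_div, sq_abs]
        simp
  have h2 : |a| * |x| + |b| / 2 * |x| ^ 2 ≤ |a| * ε₀ + |b| / 2 * ε₀ ^ 2 := by
    gcongr
  linarith
end

section
/- Let a, b, t be real numbers with b ≠ 0 and t > 0, and set ε₀ = (√(a² + 2|b|t) − |a|) / |b|. Then ε₀ is maximal: for every ε > ε₀ there exists a real x with |x| ≤ ε and |a·x + (b/2)·x²| > t. Equivalently, ε₀ = sup { ε ≥ 0 : ∀ x, |x| ≤ ε → |a·x + (b/2)·x²| ≤ t }. -/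
/-- Maximality half of Theorem 1 of the QPET paper: with
`ε₀ = (√(a² + 2|b|t) − |a|) / |b|`, for every `ε > ε₀` there is `x` with `|x| ≤ ε`
and `|a·x + (b/2)·x²| > t`; equivalently, `ε₀` is the supremum of the set of
`ε ≥ 0` such that all `x` with `|x| ≤ ε` satisfy `|a·x + (b/2)·x²| ≤ t`. -/
theorem qpet_theorem1_maximality (a b t : ℝ) (hb : b ≠ 0) (ht : 0 < t)
    (ε₀ : ℝ) (hε₀ : ε₀ = (Real.sqrt (a ^ 2 + 2 * |b| * t) - |a|) / |b|) :
    (∀ ε : ℝ, ε₀ < ε → ∃ x : ℝ, |x| ≤ ε ∧ t < |a * x + (b / 2) * x ^ 2|) ∧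
      ε₀ = sSup {ε : ℝ | 0 ≤ ε ∧ ∀ x : ℝ, |x| ≤ ε → |a * x + (b / 2) * x ^ 2| ≤ t} := by
  have hb' : 0 < |b| := abs_pos.mpr hb
  have hsnn : (0:ℝ) ≤ a ^ 2 + 2 * |b| * t := by positivity
  have hs2 : Real.sqrt (a ^ 2 + 2 * |b| * t) ^ 2 = a ^ 2 + 2 * |b| * t :=
    Real.sq_sqrt hsnn
  have hsa : |a| ≤ Real.sqrt (a ^ 2 + 2 * |b| * t) := by
    have h1 : a ^ 2 ≤ a ^ 2 + 2 * |b| * t := by nlinarith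
    have := Real.sqrt_le_sqrt h1
    simpa [Real.sqrt_sq_eq_abs] using this
  have hε0 : 0 ≤ ε₀ := by
    rw [hε₀]; exact div_nonneg (sub_nonneg.mpr hsa) hb'.le
  have hbε : |b| * ε₀ = Real.sqrt (a ^ 2 + 2 * |b| * t) - |a| := by
    rw [hε₀]; field_simp
  have key : |a| * ε₀ + |b| / 2 * ε₀ ^ 2 = t := by
    have hsq : (|b| * ε₀ + |a|) ^ 2 = a ^ 2 + 2 * |b| * t := by
      rw [show |b| * ε₀ + |a| = Real.sqrt (a ^ 2 + 2 * |b| * t) by linarith]; exact hs2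
    have h2 : |b| * (|a| * ε₀ + |b| / 2 * ε₀ ^ 2) = |b| * t := by
      linear_combination hsq / 2 - sq_abs a / 2
    exact mul_left_cancel₀ (ne_of_gt hb') h2
  have main : ∀ ε : ℝ, ε₀ < ε → ∃ x : ℝ, |x| ≤ ε ∧ t < |a * x + (b / 2) * x ^ 2| := by
    intro ε hε
    have hεpos : 0 < ε := lt_of_le_of_lt hε0 hε
    have hgrow : t < |a| * ε + |b| / 2 * ε ^ 2 := by
      nlinarith [key, mul_nonneg (abs_nonneg a) (sub_nonneg.mpr hε.le),
        mul_pos hb' (mul_pos (sub_pos.mpr hε) (show (0:ℝ) < ε + ε₀ by linarith))]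
    rcases le_or_gt 0 b with hbpos | hbneg
    · have hb0 : 0 < b := lt_of_le_of_ne hbpos (Ne.symm hb)
      have hbb : |b| = b := abs_of_nonneg hbpos
      rcases le_or_gt 0 a with hapos | haneg
      · refine ⟨ε, le_of_eq (abs_of_pos hεpos), ?_⟩
        have ha : |a| = a := abs_of_nonneg hapos
        rw [abs_of_nonneg (by nlinarith)]
        nlinarith
      · refine ⟨-ε, le_of_eq (by rw [abs_neg, abs_of_pos hεpos]), ?_⟩
        have ha : |a| = -a := abs_of_neg haneg
        rw [abs_of_nonneg (by nlinarith)]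
        nlinarith
    · have hbb : |b| = -b := abs_of_neg hbneg
      rcases le_or_gt 0 a with hapos | haneg
      · refine ⟨-ε, le_of_eq (by rw [abs_neg, abs_of_pos hεpos]), ?_⟩
        have ha : |a| = a := abs_of_nonneg hapos
        rw [abs_of_nonpos (by nlinarith)]
        nlinarith
      · refine ⟨ε, le_of_eq (abs_of_pos hεpos), ?_⟩
        have ha : |a| = -a := abs_of_neg haneg
        rw [abs_of_nonpos (by nlinarith)]
        nlinarith
  refine ⟨main, ?_⟩
  have mem : ε₀ ∈ {ε : ℝ | 0 ≤ ε ∧ ∀ x : ℝ, |x| ≤ ε → |a * x + (b / 2) * x ^ 2| ≤ t} := by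
    refine ⟨hε0, fun x hx => ?_⟩
    have h1 : |a * x + (b / 2) * x ^ 2| ≤ |a| * |x| + |b| / 2 * x ^ 2 := by
      calc |a * x + (b / 2) * x ^ 2| ≤ |a * x| + |(b / 2) * x ^ 2| := abs_add_le _ _
        _ = |a| * |x| + |b| / 2 * x ^ 2 := by
            rw [abs_mul, abs_mul, abs_div, abs_pow, sq_abs]
            norm_num
    have hx2 : x ^ 2 ≤ ε₀ ^ 2 := by
      have := sq_abs x
      nlinarith [abs_nonneg x]
    nlinarith [abs_nonneg x, abs_nonneg a]
  have ub : ∀ ε ∈ {ε : ℝ | 0 ≤ ε ∧ ∀ x : ℝ, |x| ≤ ε → |a * x + (b / 2) * x ^ 2| ≤ t}, ε ≤ ε₀ := by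
    rintro ε ⟨-, h2⟩
    by_contra h
    obtain ⟨x, hx1, hx2⟩ := main ε (lt_of_not_ge h)
    exact absurd (h2 x hx1) (not_le.mpr hx2)
  exact le_antisymm (le_csSup ⟨ε₀, ub⟩ mem) (csSup_le ⟨ε₀, mem⟩ ub)
end

section
/- Let f : ℝ → ℝ be twice differentiable at x₀, with a = f′(x₀) and b = f″(x₀) ≠ 0, let t > 0 be a QoI error threshold and ε_g > 0 a global error bound, and let f₂(x) = f(x₀) + a·(x − x₀) + (b/2)·(x − x₀)² be the second-order Taylor polynomial of f at x₀. Then for every x with |x − x₀| ≤ min(ε_g, (√(a² + 2|b|t) − |a|)/|b|), one has |f₂(x) − f(x₀)| ≤ t. -/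
/-- Theorem 1 of the QPET paper, stated for the second-order Taylor polynomial `f₂`
of a QoI function `f` at `x₀`: with `a = f′(x₀)`, `b = f″(x₀) ≠ 0`, QoI error
threshold `t > 0` and global error bound `ε_g > 0`, every `x` with
`|x − x₀| ≤ min(ε_g, (√(a² + 2|b|t) − |a|)/|b|)` satisfies `|f₂(x) − f(x₀)| ≤ t`. -/
theorem qpet_theorem1 (f : ℝ → ℝ) (x₀ : ℝ)
    (hf : DifferentiableAt ℝ f x₀) (hf' : DifferentiableAt ℝ (deriv f) x₀)
    (a b : ℝ) (ha : a = deriv f x₀) (hb : b = deriv (deriv f) x₀) (hb0 : b ≠ 0)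
    (t εg : ℝ) (ht : 0 < t) (hεg : 0 < εg)
    (f₂ : ℝ → ℝ)
    (hf₂ : ∀ x, f₂ x = f x₀ + a * (x - x₀) + (b / 2) * (x - x₀) ^ 2) :
    ∀ x : ℝ, |x - x₀| ≤ min εg ((Real.sqrt (a ^ 2 + 2 * |b| * t) - |a|) / |b|) →
      |f₂ x - f x₀| ≤ t := by
  intro x hx
  have hbpos : 0 < |b| := abs_pos.mpr hb0
  set e := |x - x₀| with he
  have he0 : 0 ≤ e := abs_nonneg _
  have hle : e ≤ (Real.sqrt (a ^ 2 + 2 * |b| * t) - |a|) / |b| :=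
    hx.trans (min_le_right _ _)
  have h1 : |b| * e + |a| ≤ Real.sqrt (a ^ 2 + 2 * |b| * t) := by
    have := (le_div_iff₀ hbpos).mp hle
    linarith
  have hnn : 0 ≤ a ^ 2 + 2 * |b| * t := by positivity
  have h2 : (|b| * e + |a|) ^ 2 ≤ a ^ 2 + 2 * |b| * t := by
    have hs := Real.sq_sqrt hnn
    have h0 : 0 ≤ |b| * e + |a| := by positivity
    nlinarith [Real.sqrt_nonneg (a ^ 2 + 2 * |b| * t)]
  have key : |a| * e + |b| / 2 * e ^ 2 ≤ t := by
    nlinarith [sq_abs a]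
  have hbound : |f₂ x - f x₀| ≤ |a| * e + |b| / 2 * e ^ 2 := by
    rw [hf₂]
    have : f x₀ + a * (x - x₀) + b / 2 * (x - x₀) ^ 2 - f x₀
        = a * (x - x₀) + b / 2 * (x - x₀) ^ 2 := by ring
    rw [this]
    calc |a * (x - x₀) + b / 2 * (x - x₀) ^ 2|
        ≤ |a * (x - x₀)| + |b / 2 * (x - x₀) ^ 2| := abs_add_le _ _
      _ = |a| * e + |b| / 2 * e ^ 2 := by
          rw [abs_mul, abs_mul, abs_div, abs_pow, abs_two]
  linarith
end

section
/- Let f : ℝ → ℝ be three times differentiable on the closed interval [x₀ − ε, x₀ + ε] with |f‴| ≤ M there, let a = f′(x₀), b = f″(x₀) with b ≠ 0, let t > 0, and suppose ε ≤ (√(a² + 2|b|t) − |a|)/|b|. Then for every x′ with |x′ − x₀| ≤ ε, the true QoI error satisfies |f(x′) − f(x₀)| ≤ t + (M/6)·ε³. -/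
open Set

/-- One iteration step of the Taylor remainder estimate. -/
lemma qpet_bound_step (c d : ℝ) (h h' : ℝ → ℝ)
    (hd : ∀ x ∈ Icc c d, HasDerivWithinAt h (h' x) (Icc c d) x)
    (h0 : h c = 0) (K : ℝ) (n : ℕ)
    (hb : ∀ x ∈ Icc c d, |h' x| ≤ K * (x - c) ^ n / n.factorial) :
    ∀ x ∈ Icc c d, |h x| ≤ K * (x - c) ^ (n + 1) / (n + 1).factorial := by
  have hB : ∀ x : ℝ, HasDerivAt (fun y => K * (y - c) ^ (n + 1) / (n + 1).factorial)
      (K * (x - c) ^ n / n.factorial) x := by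
    intro x
    have h1 : HasDerivAt (fun y : ℝ => y - c) 1 x := (hasDerivAt_id x).sub_const c
    have := ((h1.pow (n + 1)).const_mul K).div_const ((n + 1).factorial : ℝ)
    convert this using 1
    · rfl
    · rfl
    · rfl
    have : ((n + 1).factorial : ℝ) = (n + 1) * n.factorial := by
      push_cast [Nat.factorial_succ]; ring
    rw [this]
    have hnf : (n.factorial : ℝ) ≠ 0 := by positivity
    field_simp
    simp only [Nat.add_sub_cancel]; push_cast; ring
  have key := image_norm_le_of_norm_deriv_right_le_deriv_boundary
    (f := h) (f' := h') (a := c) (b := d)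
    (fun x hx => (hd x hx).continuousWithinAt)
    (fun x hx => by
      refine (hd x (Set.Ico_subset_Icc_self hx)).mono_of_mem_nhdsWithin ?_
      refine mem_nhdsWithin.mpr ⟨Iio d, isOpen_Iio, hx.2, ?_⟩
      rintro y ⟨hy1, hy2⟩
      exact ⟨le_trans hx.1 hy2, le_of_lt hy1⟩)
    (by simp [h0, Real.norm_eq_abs]) hB
    (fun x hx => by
      rw [Real.norm_eq_abs]; exact hb x (Ico_subset_Icc_self hx))
  intro x hx
  have := key hx
  simpa [Real.norm_eq_abs] using this

/-- Cubic Taylor remainder bound on an interval `[c, d]` for a function vanishing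
to second order at `c`. -/
lemma qpet_cubic_bound (c d : ℝ) (g g' g'' g''' : ℝ → ℝ)
    (h1 : ∀ x ∈ Icc c d, HasDerivWithinAt g (g' x) (Icc c d) x)
    (h2 : ∀ x ∈ Icc c d, HasDerivWithinAt g' (g'' x) (Icc c d) x)
    (h3 : ∀ x ∈ Icc c d, HasDerivWithinAt g'' (g''' x) (Icc c d) x)
    (hg0 : g c = 0) (hg'0 : g' c = 0) (hg''0 : g'' c = 0)
    (M : ℝ) (hMb : ∀ x ∈ Icc c d, |g''' x| ≤ M) :
    ∀ x ∈ Icc c d, |g x| ≤ M * (x - c) ^ 3 / 6 := by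
  have b2 := qpet_bound_step c d g'' g''' h3 hg''0 M 0 (by
    intro x hx; simpa using hMb x hx)
  have b1 := qpet_bound_step c d g' g'' h2 hg'0 M 1 (by
    intro x hx; simpa using b2 x hx)
  have b0 := qpet_bound_step c d g g' h1 hg0 M 2 (by
    intro x hx; simpa using b1 x hx)
  intro x hx
  have := b0 x hx
  norm_num [Nat.factorial] at this ⊢
  linarith


/-- Combination of Theorem 1 of the QPET paper with the Lagrange Taylor remainder
bound: if `f` is three times differentiable on `[x₀ − ε, x₀ + ε]` with `|f‴| ≤ M`
there, `a = f′(x₀)`, `b = f″(x₀) ≠ 0`, `t > 0`, and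
`ε ≤ (√(a² + 2|b|t) − |a|)/|b|`, then for every `x′` with `|x′ − x₀| ≤ ε` the true
QoI error satisfies `|f(x′) − f(x₀)| ≤ t + (M/6)·ε³`. -/
theorem qpet_theorem1_with_remainder (ε : ℝ) (hε : 0 < ε) (x₀ : ℝ)
    (f f' f'' f''' : ℝ → ℝ)
    (hf1 : ∀ x ∈ Set.Icc (x₀ - ε) (x₀ + ε),
      HasDerivWithinAt f (f' x) (Set.Icc (x₀ - ε) (x₀ + ε)) x)
    (hf2 : ∀ x ∈ Set.Icc (x₀ - ε) (x₀ + ε),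
      HasDerivWithinAt f' (f'' x) (Set.Icc (x₀ - ε) (x₀ + ε)) x)
    (hf3 : ∀ x ∈ Set.Icc (x₀ - ε) (x₀ + ε),
      HasDerivWithinAt f'' (f''' x) (Set.Icc (x₀ - ε) (x₀ + ε)) x)
    (M : ℝ) (hM : ∀ ξ ∈ Set.Icc (x₀ - ε) (x₀ + ε), |f''' ξ| ≤ M)
    (a b : ℝ) (ha : a = f' x₀) (hb : b = f'' x₀) (hb0 : b ≠ 0)
    (t : ℝ) (ht : 0 < t)
    (hεle : ε ≤ (Real.sqrt (a ^ 2 + 2 * |b| * t) - |a|) / |b|) :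
    ∀ x' : ℝ, |x' - x₀| ≤ ε → |f x' - f x₀| ≤ t + (M / 6) * ε ^ 3 := by
  intro x' hx'
  set I := Set.Icc (x₀ - ε) (x₀ + ε) with hI
  have hx₀I : x₀ ∈ I := Set.mem_Icc.mpr ⟨by linarith, by linarith⟩
  have hx'I : x' ∈ I := by
    rw [abs_le] at hx'; exact Set.mem_Icc.mpr ⟨by linarith, by linarith⟩
  have hM0 : 0 ≤ M := le_trans (abs_nonneg _) (hM x₀ hx₀I)
  -- the remainder function and its derivatives
  set g : ℝ → ℝ := fun y => f y - f x₀ - a * (y - x₀) - b / 2 * (y - x₀) ^ 2 with hgdef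
  set g' : ℝ → ℝ := fun y => f' y - a - b * (y - x₀) with hg'def
  set g'' : ℝ → ℝ := fun y => f'' y - b with hg''def
  have hgd : ∀ x ∈ I, HasDerivWithinAt g (g' x) I x := by
    intro x hx
    have h1 : HasDerivAt (fun y : ℝ => y - x₀) 1 x := (hasDerivAt_id x).sub_const x₀
    have hp : HasDerivAt (fun y => f x₀ + a * (y - x₀) + b / 2 * (y - x₀) ^ 2)
        (a + b * (x - x₀)) x := by
      have := ((h1.const_mul a).const_add (f x₀)).add ((h1.pow 2).const_mul (b / 2))
      convert this using 1
      · rfl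
      · rfl
      · rfl
      push_cast; ring
    have := (hf1 x hx).sub hp.hasDerivWithinAt
    convert this using 1
    · rfl
    · rfl
    · funext y; simp [hgdef]; ring
    · simp [hg'def]; ring
  have hg'd : ∀ x ∈ I, HasDerivWithinAt g' (g'' x) I x := by
    intro x hx
    have h1 : HasDerivAt (fun y : ℝ => a + b * (y - x₀)) b x := by
      have := (((hasDerivAt_id x).sub_const x₀).const_mul b).const_add a
      simpa using this
    have := (hf2 x hx).sub h1.hasDerivWithinAt
    convert this using 1
    · rfl
    · rfl
    · funext y; simp [hg'def]; ring
  have hg''d : ∀ x ∈ I, HasDerivWithinAt g'' (f''' x) I x := by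
    intro x hx
    exact (hf3 x hx).sub_const b
  have hg0 : g x₀ = 0 := by simp [hgdef]
  have hg'0 : g' x₀ = 0 := by simp [hg'def, ha]
  have hg''0 : g'' x₀ = 0 := by simp [hg''def, hb]
  -- bound on |g x'|
  have hgbound : |g x'| ≤ M * ε ^ 3 / 6 := by
    rcases le_total x₀ x' with hc | hc
    · -- right side
      have hsub : Set.Icc x₀ x' ⊆ I := fun y hy =>
        ⟨by linarith [hy.1], le_trans hy.2 hx'I.2⟩
      have := qpet_cubic_bound x₀ x' g g' g'' f'''
        (fun x hx => (hgd x (hsub hx)).mono hsub)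
        (fun x hx => (hg'd x (hsub hx)).mono hsub)
        (fun x hx => (hg''d x (hsub hx)).mono hsub)
        hg0 hg'0 hg''0 M (fun x hx => hM x (hsub hx))
        x' ⟨hc, le_refl x'⟩
      have h1 : x' - x₀ ≤ ε := by rw [abs_le] at hx'; linarith
      have h2 : 0 ≤ x' - x₀ := by linarith
      calc |g x'| ≤ M * (x' - x₀) ^ 3 / 6 := this
        _ ≤ M * ε ^ 3 / 6 := by
            have : (x' - x₀) ^ 3 ≤ ε ^ 3 := pow_le_pow_left₀ h2 h1 3
            nlinarith
    · -- left side: reflect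
      have hcd : x₀ ≤ 2 * x₀ - x' := by linarith
      set φ : ℝ → ℝ := fun s => 2 * x₀ - s with hφdef
      have hφmaps : Set.MapsTo φ (Icc x₀ (2 * x₀ - x')) I := by
        intro y hy
        simp only [hφdef, hI, Set.mem_Icc] at *
        rw [abs_le] at hx'
        constructor <;> linarith [hy.1, hy.2]
      have hφd : ∀ s : ℝ, HasDerivAt φ (-1) s := by
        intro s
        exact (hasDerivAt_id s).const_sub (2 * x₀)
      have comp : ∀ (h h' : ℝ → ℝ), (∀ x ∈ I, HasDerivWithinAt h (h' x) I x) →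
          ∀ s ∈ Icc x₀ (2 * x₀ - x'),
            HasDerivWithinAt (fun y => h (φ y)) (-(h' (φ s))) (Icc x₀ (2 * x₀ - x')) s := by
        intro h h' hh s hs
        have := (hh (φ s) (hφmaps hs)).comp s (hφd s).hasDerivWithinAt hφmaps
        exact this.congr_deriv (by ring)
      have hx₀φ : φ x₀ = x₀ := by simp [hφdef]; ring
      have hkey := qpet_cubic_bound x₀ (2 * x₀ - x') (fun y => g (φ y))
        (fun y => -(g' (φ y))) (fun y => g'' (φ y)) (fun y => -(f''' (φ y)))
        (comp g g' hgd)
        (fun x hx => by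
          have := (comp g' g'' hg'd x hx).neg
          exact this.congr_deriv (neg_neg _))
        (comp g'' f''' hg''d)
        (by simp only [hx₀φ]; exact hg0)
        (by simp only [hx₀φ, hg'0]; ring)
        (by simp only [hx₀φ]; exact hg''0)
        M (fun x hx => by simpa using hM (φ x) (hφmaps hx))
        (2 * x₀ - x') ⟨hcd, le_refl _⟩
      have hφd' : φ (2 * x₀ - x') = x' := by simp [hφdef]
      simp only [hφd'] at hkey
      have h1 : x₀ - x' ≤ ε := by rw [abs_le] at hx'; linarith
      have h2 : 0 ≤ x₀ - x' := by linarith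
      have hdc : 2 * x₀ - x' - x₀ = x₀ - x' := by ring
      rw [hdc] at hkey
      calc |g x'| ≤ M * (x₀ - x') ^ 3 / 6 := hkey
        _ ≤ M * ε ^ 3 / 6 := by
            have : (x₀ - x') ^ 3 ≤ ε ^ 3 := pow_le_pow_left₀ h2 h1 3
            nlinarith
  -- algebra: |a| ε + |b| ε²/2 ≤ t
  have hb' : 0 < |b| := abs_pos.mpr hb0
  have hsq : (ε * |b| + |a|) ^ 2 ≤ a ^ 2 + 2 * |b| * t := by
    have h1 : ε * |b| + |a| ≤ Real.sqrt (a ^ 2 + 2 * |b| * t) := by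
      have := (le_div_iff₀ hb').mp hεle
      linarith
    have h2 : 0 ≤ ε * |b| + |a| := by positivity
    have h3 : 0 ≤ a ^ 2 + 2 * |b| * t := by positivity
    nlinarith [Real.sq_sqrt h3, Real.sqrt_nonneg (a ^ 2 + 2 * |b| * t)]
  have hpoly : |a| * ε + |b| / 2 * ε ^ 2 ≤ t := by
    have := sq_abs a
    nlinarith [sq_abs b, hb'.le, hε.le]
  -- combine
  have hfeq : f x' - f x₀ = g x' + (a * (x' - x₀) + b / 2 * (x' - x₀) ^ 2) := by
    simp only [hgdef]; ring
  rw [hfeq]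
  have habs : |g x' + (a * (x' - x₀) + b / 2 * (x' - x₀) ^ 2)| ≤
      |g x'| + |a| * |x' - x₀| + |b| / 2 * |x' - x₀| ^ 2 := by
    calc _ ≤ |g x'| + |a * (x' - x₀) + b / 2 * (x' - x₀) ^ 2| := abs_add_le _ _
      _ ≤ |g x'| + (|a * (x' - x₀)| + |b / 2 * (x' - x₀) ^ 2|) := by
          linarith [abs_add_le (a * (x' - x₀)) (b / 2 * (x' - x₀) ^ 2)]
      _ = |g x'| + |a| * |x' - x₀| + |b| / 2 * |x' - x₀| ^ 2 := by
          rw [abs_mul, abs_mul, abs_div, abs_pow, abs_two]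
          ring
  have hε2 : |x' - x₀| ^ 2 ≤ ε ^ 2 := by
    have := abs_nonneg (x' - x₀); nlinarith
  have : |a| * |x' - x₀| + |b| / 2 * |x' - x₀| ^ 2 ≤ |a| * ε + |b| / 2 * ε ^ 2 := by
    have t1 : |a| * |x' - x₀| ≤ |a| * ε := mul_le_mul_of_nonneg_left hx' (abs_nonneg a)
    have t2 : |b| / 2 * |x' - x₀| ^ 2 ≤ |b| / 2 * ε ^ 2 :=
      mul_le_mul_of_nonneg_left hε2 (by positivity)
    linarith
  linarith [habs, hgbound]
end
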